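/- Let G be a directed acyclic graph with target T, let v be a vertex, and let P ⊆ pa(v) be any set of observed parents of v. Let G* be the graph obtained by node-splitting v on P, producing v(P=∅) with edge v(P=∅) → v. Let Z be a conditioning set with v ∉ Z. If in G there is an unstable path from v to T with respect to Z whose first edge leaves v through a child of v (i.e., of the form v → X … T) and which is active with respect to Z, then in G* the corresponding path v(P=∅) → v → X … T from v(P=∅) to T is an unstable path that is active with respect to Z. That is, unstable active paths from v beginning through a child of v are inherited by every counterfactual version of v obtained by node-splitting. -/

import Mathlib

/-! Basic definitions for paths, colliders, activation (d-connection), and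
(un)stability in a directed graph, following the paper's conventions.

* A directed graph on vertex type `V` is an edge relation `E : V → V → Prop`.
* A path is a list of distinct vertices consecutively joined by edges of the
  graph traversed in either direction.
* A vertex `w` is a collider on a path if both path edges at `w` point into `w`.
* Given a conditioning set `Z`, a path is active w.r.t. `Z` if every collider on
  the path is in `Z` or has a descendant in `Z`, and every interior non-collider
  on the path is not in `Z`.
* A path is unstable (w.r.t. an optional selection vertex `S` and a set `U` of
  unobserved vertices) if it contains `S` or a vertex of `U`. -/

variable {V : Type*}

/-- A path: a list of distinct vertices, consecutive ones joined by an edge of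
the graph traversed in either direction. -/
def IsUndirPath (E : V → V → Prop) (p : List V) : Prop :=
  p.Nodup ∧ p.Chain' (fun a b => E a b ∨ E b a)

/-- `p` is a path between `a` and `b`. -/
def PathBetween (E : V → V → Prop) (a b : V) (p : List V) : Prop :=
  IsUndirPath E p ∧ p.head? = some a ∧ p.getLast? = some b

/-- `w` is a collider on the path `p`: both path edges at `w` point into `w`. -/
def IsColliderOn (E : V → V → Prop) (p : List V) (w : V) : Prop :=
  ∃ a b, [a, w, b] <:+: p ∧ E a w ∧ E b w

/-- A path `p` is active with respect to the conditioning set `Z`: every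
collider on `p` is in `Z` or has a descendant in `Z`, and every (interior)
non-collider on `p` is not in `Z`. -/
def ActivePath (E : V → V → Prop) (Z : Set V) (p : List V) : Prop :=
  (∀ w, IsColliderOn E p w → w ∈ Z ∨ ∃ d ∈ Z, Relation.TransGen E w d) ∧
  (∀ w ∈ p.tail.dropLast, ¬ IsColliderOn E p w → w ∉ Z)

/-- A path is unstable if it contains the selection vertex `S` or an unobserved
vertex of `U`. -/
def UnstablePath (S : Option V) (U : Set V) (p : List V) : Prop :=
  ∃ w ∈ p, w ∈ U ∨ S = some w

/-- The edge relation is acyclic (the graph is a DAG). -/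
def AcyclicRel (E : V → V → Prop) : Prop :=
  ∀ v, ¬ Relation.TransGen E v v

/-- A conditioning set `Z` is stable: no member of `Z` has an active unstable
path to the target `T` with respect to `Z`. -/
def StableSet (E : V → V → Prop) (S : Option V) (U : Set V) (T : V) (Z : Set V) : Prop :=
  ∀ x ∈ Z, ∀ p : List V, PathBetween E T x p → ActivePath E Z p → ¬ UnstablePath S U p

/-- A directed graph with an explicit vertex set (so that node-splitting can
insert a fresh vertex). -/
structure GraphState (V : Type*) where
  verts : Set V
  edge : V → V → Prop

/-- The node-splitting operation on a vertex `v` with intervention set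
`P ⊆ pa(v)` and fresh counterfactual vertex `w = v(P=∅)`:
* insert the new vertex `w`;
* delete each edge `x → v` for `x ∈ pa(v) \ P`;
* insert an edge `x → w` for each `x ∈ pa(v) \ P`;
* insert the edge `w → v`. -/
def nodeSplit (G : GraphState V) (v w : V) (P : Set V) : GraphState V where
  verts := insert w G.verts
  edge := fun a b =>
    (G.edge a b ∧ ¬ (b = v ∧ a ∉ P)) ∨
    (b = w ∧ G.edge a v ∧ a ∉ P) ∨
    (a = w ∧ b = v)

/-!
Node-splitting only changes edges into `v` and `w`. The path `v → X … T` avoids `w` and meets `v`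
only at its start, so its edges and colliders survive. On the new path `w → v → X … T` the vertex
`v` is no collider, since `X → v` would close a cycle with `v → X`, and it is not in `Z`. Descendants
are preserved because each deleted edge `a → v` is replaced by the detour `a → w → v`.
-/

namespace List

theorem mem_of_triple_infix_cons {a b c x : V} {l : List V} (h : [a, c, b] <:+: x :: l) : c ∈ l := by
  rcases infix_cons_iff.mp h with hpre | hinf
  · obtain ⟨s, hs⟩ := hpre
    simp only [cons_append, cons.injEq] at hs
    simp [← hs.2]
  · exact hinf.subset (by simp)

end List

section Paths

variable {E E' : V → V → Prop}

theorem IsUndirPath.cons {x y : V} {r : List V} (hx : x ∉ y :: r) (hxy : E x y ∨ E y x)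
    (h : IsUndirPath E (y :: r)) : IsUndirPath E (x :: y :: r) :=
  ⟨List.nodup_cons.mpr ⟨hx, h.1⟩, List.isChain_cons_cons.mpr ⟨hxy, h.2⟩⟩

theorem IsUndirPath.congr {l : List V} (h : ∀ a ∈ l, ∀ b ∈ l, E a b ↔ E' a b)
    (hl : IsUndirPath E l) : IsUndirPath E' l :=
  ⟨hl.1, hl.2.imp_of_mem_imp fun a b ha hb => Or.imp (h a ha b hb).1 (h b hb a ha).1⟩

theorem isColliderOn_cons_cons_cons_iff {x y z c : V} {r : List V} :
    IsColliderOn E (x :: y :: z :: r) c ↔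
      (c = y ∧ E x y ∧ E z y) ∨ IsColliderOn E (y :: z :: r) c := by
  simp only [IsColliderOn, List.infix_cons_iff (a := x), List.cons_prefix_cons, List.nil_prefix,
    and_true, or_and_right, exists_or]
  constructor
  · rintro (⟨a, b, ⟨rfl, rfl, rfl⟩, hac, hbc⟩ | h)
    · exact Or.inl ⟨rfl, hac, hbc⟩
    · exact Or.inr h
  · rintro (⟨rfl, hxy, hzy⟩ | h)
    · exact Or.inl ⟨x, z, ⟨rfl, rfl, rfl⟩, hxy, hzy⟩
    · exact Or.inr h

/-- Colliders are interior vertices, so only edges into the tail of a path matter. -/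
theorem isColliderOn_cons_congr {x c : V} {l : List V} (h : ∀ a, ∀ b ∈ l, E a b ↔ E' a b) :
    IsColliderOn E (x :: l) c ↔ IsColliderOn E' (x :: l) c := by
  constructor <;> rintro ⟨a, b, hinf, hac, hbc⟩ <;> have hc := List.mem_of_triple_infix_cons hinf
  · exact ⟨a, b, hinf, (h a c hc).1 hac, (h b c hc).1 hbc⟩
  · exact ⟨a, b, hinf, (h a c hc).2 hac, (h b c hc).2 hbc⟩

theorem ActivePath.cons {Z : Set V} {x y : V} {r : List V}
    (hcoll : ∀ c, IsColliderOn E' (x :: y :: r) c ↔ IsColliderOn E (y :: r) c)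
    (hdesc : E ≤ Relation.TransGen E') (hy : y ∉ Z) (hp : ActivePath E Z (y :: r)) :
    ActivePath E' Z (x :: y :: r) := by
  refine ⟨fun c hc => ?_, fun c hc hnc => ?_⟩
  · rcases hp.1 c ((hcoll c).1 hc) with hcZ | ⟨d, hdZ, hcd⟩
    · exact Or.inl hcZ
    · exact Or.inr ⟨d, hdZ, Relation.TransGen.closed hdesc c d hcd⟩
  · have hc' : c = y ∨ c ∈ r.dropLast := by
      cases r with
      | nil => simp at hc
      | cons z r => simpa using hc
    rcases hc' with rfl | hc'
    · exact hy
    · exact hp.2 c hc' fun h => hnc ((hcoll c).2 h)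

theorem UnstablePath.cons {S : Option V} {U : Set V} {l : List V} (x : V)
    (h : UnstablePath S U l) : UnstablePath S U (x :: l) :=
  let ⟨u, hu, hU⟩ := h
  ⟨u, List.mem_cons_of_mem x hu, hU⟩

end Paths

section NodeSplit

variable {G : GraphState V} {v w : V} {P : Set V}

theorem nodeSplit_edge_iff_of_ne {a b : V} (hbv : b ≠ v) (hbw : b ≠ w) :
    (nodeSplit G v w P).edge a b ↔ G.edge a b := by
  simp [nodeSplit, hbv, hbw]

theorem nodeSplit_edge_split_iff {a : V} (haw : a ≠ w) (hvw : v ≠ w) :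
    (nodeSplit G v w P).edge a v ↔ G.edge a v ∧ a ∈ P := by
  simp [nodeSplit, haw, hvw]

theorem edge_le_transGen_nodeSplit_edge : G.edge ≤ Relation.TransGen (nodeSplit G v w P).edge := by
  intro a b hab
  by_cases hcut : b = v ∧ a ∉ P
  · obtain ⟨rfl, haP⟩ := hcut
    exact .head (Or.inr (Or.inl ⟨rfl, hab, haP⟩)) (.single (Or.inr (Or.inr ⟨rfl, rfl⟩)))
  · exact .single (Or.inl ⟨hab, hcut⟩)

theorem nodeSplit_edge_iff_of_mem_tail {l : List V} (hnd : (v :: l).Nodup) (hw : w ∉ v :: l)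
    {a b : V} (hb : b ∈ l) : (nodeSplit G v w P).edge a b ↔ G.edge a b :=
  nodeSplit_edge_iff_of_ne (fun h => (List.nodup_cons.mp hnd).1 (h ▸ hb))
    (fun h => hw (h ▸ List.mem_cons_of_mem v hb))

theorem IsUndirPath.nodeSplit_cons {X : V} {t : List V} (hvX : G.edge v X)
    (hp : IsUndirPath G.edge (v :: X :: t)) (hw : w ∉ v :: X :: t) :
    IsUndirPath (nodeSplit G v w P).edge (w :: v :: X :: t) := by
  have htail : IsUndirPath (nodeSplit G v w P).edge (X :: t) :=
    IsUndirPath.congr (fun a ha b hb => (nodeSplit_edge_iff_of_mem_tail hp.1 hw hb).symm)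
      ⟨hp.1.of_cons, hp.2.tail⟩
  exact htail.cons (List.nodup_cons.mp hp.1).1
      (Or.inl ((nodeSplit_edge_iff_of_mem_tail hp.1 hw List.mem_cons_self).2 hvX))
    |>.cons hw (Or.inl (Or.inr (Or.inr ⟨rfl, rfl⟩)))

theorem isColliderOn_nodeSplit_cons_iff (hdag : AcyclicRel G.edge) {X c : V} {t : List V}
    (hvX : G.edge v X) (hnd : (v :: X :: t).Nodup) (hw : w ∉ v :: X :: t) :
    IsColliderOn (nodeSplit G v w P).edge (w :: v :: X :: t) c ↔
      IsColliderOn G.edge (v :: X :: t) c := by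
  rw [isColliderOn_cons_cons_cons_iff,
    isColliderOn_cons_congr fun a b hb => nodeSplit_edge_iff_of_mem_tail hnd hw hb, or_iff_right]
  rintro ⟨-, -, hXv⟩
  have hXw : X ≠ w := fun h => hw (by simp [h])
  have hvw : v ≠ w := fun h => hw (by simp [h])
  exact hdag v (.tail (.single hvX) ((nodeSplit_edge_split_iff hXw hvw).1 hXv).1)

end NodeSplit

theorem nodeSplit_inherits_unstable_paths_through_children_general
    {G : GraphState V} (hdag : AcyclicRel G.edge)
    {S : Option V} {U : Set V} {T v w X : V} {P : Set V}
    (hfresh : w ∉ G.verts)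
    {Z : Set V} (hvZ : v ∉ Z)
    {p : List V} (hpverts : ∀ x ∈ p, x ∈ G.verts)
    (hp : PathBetween G.edge v T p) (hfirst : [v, X] <+: p) (hchild : G.edge v X)
    (hunst : UnstablePath S U p) (hact : ActivePath G.edge Z p) :
    PathBetween (nodeSplit G v w P).edge w T (w :: p) ∧
      UnstablePath S U (w :: p) ∧ ActivePath (nodeSplit G v w P).edge Z (w :: p) := by
  obtain ⟨t, rfl⟩ := hfirst
  obtain ⟨hpath, -, hlast⟩ := hp
  have hw : w ∉ v :: X :: t := fun h => hfresh (hpverts w h)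
  have hcoll c := isColliderOn_nodeSplit_cons_iff (c := c) (P := P) hdag hchild hpath.1 hw
  exact ⟨⟨hpath.nodeSplit_cons hchild hw, rfl, by simpa using hlast⟩, hunst.cons w,
    hact.cons hcoll edge_le_transGen_nodeSplit_edge hvZ⟩

/-- Let `G` be a DAG with target `T`, `v` a vertex, and
`P ⊆ pa(v)` any set of observed parents of `v`.  Let `G*` be the graph obtained
by node-splitting `v` on `P`, producing `w = v(P=∅)` with edge `w → v`.  Let `Z`
be a conditioning set with `v ∉ Z`.  If in `G` there is an unstable path `p`
from `v` to `T` w.r.t. `Z` whose first edge leaves `v` through a child `X` of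
`v` (i.e. `p` has the form `v → X … T`) and which is active w.r.t. `Z`, then in
`G*` the corresponding path `w :: p`, i.e. `v(P=∅) → v → X … T`, is an unstable
path from `v(P=∅)` to `T` that is active w.r.t. `Z`: unstable active paths from
`v` beginning through a child of `v` are inherited by every counterfactual
version of `v` obtained by node-splitting. -/
theorem nodeSplit_inherits_unstable_paths_through_children
    {G : GraphState V} (hdag : AcyclicRel G.edge)
    {S : Option V} {U Obs : Set V} {T v w X : V} {P : Set V}
    (hP : ∀ x ∈ P, G.edge x v) (hPobs : P ⊆ Obs)
    (hfresh : w ∉ G.verts) (hwU : w ∉ U) (hwS : S ≠ some w)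
    {Z : Set V} (hvZ : v ∉ Z) (hwZ : w ∉ Z)
    {p : List V} (hpverts : ∀ x ∈ p, x ∈ G.verts)
    (hp : PathBetween G.edge v T p) (hfirst : [v, X] <+: p) (hchild : G.edge v X)
    (hunst : UnstablePath S U p) (hact : ActivePath G.edge Z p) :
    PathBetween (nodeSplit G v w P).edge w T (w :: p) ∧
      UnstablePath S U (w :: p) ∧ ActivePath (nodeSplit G v w P).edge Z (w :: p) :=
  nodeSplit_inherits_unstable_paths_through_children_general hdag hfresh hvZ hpverts hp hfirst
    hchild hunst hact
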